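/- Let λ > 1, N ≥ 3, α ∈ ℝ, and suppose a family of nonnegative numbers (A_k)_{k∈ℤ}, uniformly bounded by C, satisfies for a parameter L ≫ 1 and fixed ν ∈ ℕ, δ ∈ (0,1): A_i ≤ C (λ^i L)^{−(N/2+1)} ∑_{j=−ν−1}^{ν+2} A_{i+j}^{1/2} + C L^{−(1−δ)} ∑_{k=−ν−2}^{∞} λ^{−Nk} A_{i+k} for all i ∈ ℤ. Then for every ε ∈ (0,1) there exists C_ε > 0 (independent of L) such that A_0 ≤ C_ε L^{−(N+2−ε)}. -/
import Mathlib

open Real Finset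

private lemma maxM_one_le (lam : ℝ) (i : ℤ) : (1:ℝ) ≤ max (lam ^ (-i)) 1 := le_max_right _ _

private lemma maxM_shift (lam : ℝ) (hlam : 1 < lam) (ν : ℕ) (i k : ℤ) (hk : -(ν:ℤ)-2 ≤ k) :
    max (lam ^ (-(i+k))) 1 ≤ lam ^ ((ν:ℤ)+2) * max (lam ^ (-i)) 1 := by
  have h0 : (0:ℝ) < lam := lt_trans one_pos hlam
  have hK : (1:ℝ) ≤ lam ^ ((ν:ℤ)+2) := one_le_zpow₀ hlam.le (by positivity)
  refine max_le ?_ ?_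
  · have : lam ^ (-(i+k)) = lam ^ (-k) * lam ^ (-i) := by
      rw [← zpow_add₀ (ne_of_gt h0)]; ring_nf
    rw [this]
    have h1 : lam ^ (-k) ≤ lam ^ ((ν:ℤ)+2) := zpow_le_zpow_right₀ hlam.le (by omega)
    have h2 : lam ^ (-i) ≤ max (lam ^ (-i)) 1 := le_max_left _ _
    exact mul_le_mul h1 h2 (le_of_lt (zpow_pos h0 _)) (by positivity)
  · exact one_le_mul_of_one_le_of_one_le hK (maxM_one_le lam i)

private lemma step16 (N : ℕ) (lam : ℝ) (hlam : 1 < lam) (hN : 3 ≤ N) (ν : ℕ)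
    (δ C : ℝ) (hδ : δ ∈ Set.Ioo (0 : ℝ) 1) (hC : 0 < C)
    (θ θ' : ℝ) (hθ0 : 0 ≤ θ) (hθθ' : θ ≤ θ') (hθ'a : θ' ≤ (N:ℝ)/2+1+θ/2)
    (hθ'b : θ' ≤ θ + (1-δ)) (T : ℝ) (hT : 0 < T) :
    ∃ T', 0 < T' ∧ ∀ L : ℝ, 1 ≤ L → ∀ A : ℤ → ℝ,
      (∀ k, 0 ≤ A k) → (∀ k, A k ≤ C) →
      (∀ i : ℤ, A i ≤
          C * (lam ^ i * L) ^ (-((N : ℝ) / 2 + 1)) *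
            (∑ j ∈ Finset.Icc (-(ν : ℤ) - 1) ((ν : ℤ) + 2), Real.sqrt (A (i + j))) +
          C * L ^ (-(1 - δ)) *
            ∑' m : ℕ, lam ^ (-(N : ℤ) * ((m : ℤ) - (ν : ℤ) - 2)) *
              A (i + ((m : ℤ) - (ν : ℤ) - 2))) →
      (∀ i, A i ≤ T * (max (lam ^ (-i)) 1) ^ θ * L ^ (-θ)) →
      ∀ i, A i ≤ T' * (max (lam ^ (-i)) 1) ^ θ' * L ^ (-θ') := by
  have h0 : (0:ℝ) < lam := lt_trans one_pos hlam
  set K : ℝ := lam ^ ((ν:ℤ)+2) with hKdef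
  have hK1 : (1:ℝ) ≤ K := one_le_zpow₀ hlam.le (by positivity)
  have hK0 : (0:ℝ) < K := lt_of_lt_of_le one_pos hK1
  set r : ℝ := lam ^ (-(N:ℤ)) with hrdef
  have hr0 : (0:ℝ) < r := zpow_pos h0 _
  have hr1 : r < 1 := by
    rw [hrdef, zpow_neg]
    refine inv_lt_one_of_one_lt₀ ?_
    exact one_lt_zpow₀ hlam (by omega)
  have hθ'0 : 0 ≤ θ' := le_trans hθ0 hθθ'
  set c1 : ℝ := C * (2*(ν:ℝ)+4) * T ^ ((1:ℝ)/2) * K ^ (θ/2) with hc1def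
  set c2 : ℝ := C * lam ^ ((N:ℤ)*((ν:ℤ)+2)) * (1-r)⁻¹ * T * K ^ θ with hc2def
  have hc1 : 0 < c1 := by
    have := Real.rpow_pos_of_pos hT ((1:ℝ)/2)
    have := Real.rpow_pos_of_pos hK0 (θ/2)
    positivity
  have hc2 : 0 < c2 := by
    have h1 : (0:ℝ) < lam ^ ((N:ℤ)*((ν:ℤ)+2)) := zpow_pos h0 _
    have h2 : (0:ℝ) < (1-r)⁻¹ := inv_pos.mpr (by linarith)
    have := Real.rpow_pos_of_pos hK0 θ
    positivity
  refine ⟨C + c1 + c2, by positivity, ?_⟩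
  intro L hL A hA0 hAC hrec hIH i
  have hL0 : (0:ℝ) < L := lt_of_lt_of_le one_pos hL
  have hM1 : (1:ℝ) ≤ max (lam ^ (-i)) 1 := maxM_one_le lam i
  have hM0 : (0:ℝ) < max (lam ^ (-i)) 1 := lt_of_lt_of_le one_pos hM1
  set E : ℝ := (max (lam ^ (-i)) 1) ^ θ' * L ^ (-θ') with hEdef
  have hE0 : 0 < E := by
    have := Real.rpow_pos_of_pos hM0 θ'
    have := Real.rpow_pos_of_pos hL0 (-θ')
    positivity
  have goalEq : (C + c1 + c2) * (max (lam ^ (-i)) 1) ^ θ' * L ^ (-θ') = (C + c1 + c2) * E := by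
    rw [hEdef]; ring
  rw [goalEq]
  rcases le_or_gt (lam ^ i * L) 1 with hx | hx
  · -- small region: trivial bound
    have hzi : (0:ℝ) < lam ^ i := zpow_pos h0 i
    have hLi : L ≤ (lam ^ i)⁻¹ := by
      rw [← one_div, le_div_iff₀ hzi]; linarith [mul_comm L (lam ^ i)]
    have hLM : L ≤ max (lam ^ (-i)) 1 := by
      refine le_trans ?_ (le_max_left _ _)
      rwa [zpow_neg]
    have h1E : 1 ≤ E := by
      have h1 : L ^ θ' ≤ (max (lam ^ (-i)) 1) ^ θ' :=
        Real.rpow_le_rpow hL0.le hLM hθ'0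
      have h2 : L ^ θ' * L ^ (-θ') = 1 := by
        rw [← Real.rpow_add hL0]; simp
      exact h2 ▸ (mul_le_mul_of_nonneg_right h1 (le_of_lt (Real.rpow_pos_of_pos hL0 (-θ'))))
    calc A i ≤ C := hAC i
    _ ≤ C * E := le_mul_of_one_le_right hC.le h1E
    _ ≤ (C + c1 + c2) * E := by nlinarith
  · -- main region : 1 < lam^i * L
    have hx0 : (0:ℝ) < lam ^ i * L := lt_trans one_pos hx
    refine le_trans (hrec i) ?_
    -- term 1
    have hsqrt : ∀ j ∈ Finset.Icc (-(ν:ℤ)-1) ((ν:ℤ)+2),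
        Real.sqrt (A (i+j)) ≤ T ^ ((1:ℝ)/2) * K ^ (θ/2) *
          ((max (lam ^ (-i)) 1) ^ (θ/2) * L ^ (-(θ/2))) := by
      intro j hj
      have hjmem := Finset.mem_Icc.mp hj
      have hAij : A (i+j) ≤ T * (K * max (lam ^ (-i)) 1) ^ θ * L ^ (-θ) := by
        refine le_trans (hIH (i+j)) ?_
        have hm : max (lam ^ (-(i+j))) 1 ≤ K * max (lam ^ (-i)) 1 :=
          maxM_shift lam hlam ν i j (by omega)
        have : (max (lam ^ (-(i+j))) 1) ^ θ ≤ (K * max (lam ^ (-i)) 1) ^ θ :=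
          Real.rpow_le_rpow (by positivity) hm hθ0
        have hLθ : (0:ℝ) ≤ L ^ (-θ) := le_of_lt (Real.rpow_pos_of_pos hL0 _)
        exact mul_le_mul_of_nonneg_right (mul_le_mul_of_nonneg_left this hT.le) hLθ
      refine le_trans (Real.sqrt_le_sqrt hAij) ?_
      rw [Real.sqrt_eq_rpow]
      have hKM0 : (0:ℝ) ≤ K * max (lam ^ (-i)) 1 := by positivity
      have hrw : T * (K * max (lam ^ (-i)) 1) ^ θ * L ^ (-θ) =
          T * (K ^ θ * (max (lam ^ (-i)) 1) ^ θ * L ^ (-θ)) := by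
        rw [Real.mul_rpow hK0.le hM0.le]; ring
      rw [hrw, Real.mul_rpow hT.le (by positivity),
        Real.mul_rpow (by positivity) (le_of_lt (Real.rpow_pos_of_pos hL0 _)),
        Real.mul_rpow (le_of_lt (Real.rpow_pos_of_pos hK0 _)) (le_of_lt (Real.rpow_pos_of_pos hM0 _)),
        ← Real.rpow_mul hK0.le, ← Real.rpow_mul hM0.le, ← Real.rpow_mul hL0.le]
      have e1 : θ * (1/2) = θ/2 := by ring
      have e2 : -θ * (1/2) = -(θ/2) := by ring
      rw [e1, e2]
      ring_nf
      exact le_refl _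
    -- cardinality of the window
    have hcard : (Finset.Icc (-(ν:ℤ)-1) ((ν:ℤ)+2)).card = 2*ν+4 := by
      rw [Int.card_Icc]; omega
    have hsum : (∑ j ∈ Finset.Icc (-(ν:ℤ)-1) ((ν:ℤ)+2), Real.sqrt (A (i + j))) ≤
        (2*(ν:ℝ)+4) * (T ^ ((1:ℝ)/2) * K ^ (θ/2) *
          ((max (lam ^ (-i)) 1) ^ (θ/2) * L ^ (-(θ/2)))) := by
      refine le_trans (Finset.sum_le_card_nsmul _ _ _ hsqrt) ?_
      rw [hcard, nsmul_eq_mul]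
      push_cast
      exact le_refl _
    -- key inequality for the first term
    have hKI1 : (lam ^ i * L) ^ (-((N : ℝ) / 2 + 1)) *
        ((max (lam ^ (-i)) 1) ^ (θ/2) * L ^ (-(θ/2))) ≤ E := by
      have hzi : (0:ℝ) < lam ^ i := zpow_pos h0 i
      rcases le_total i 0 with hi | hi
      · have hMeq : max (lam ^ (-i)) 1 = lam ^ (-i) :=
          max_eq_left (one_le_zpow₀ hlam.le (by omega))
        have hconv : ∀ t : ℝ, (lam ^ (-i) : ℝ) ^ t = (lam ^ i : ℝ) ^ (-t) := by
          intro t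
          rw [zpow_neg, Real.inv_rpow hzi.le, ← Real.rpow_neg hzi.le]
        rw [hMeq, hconv (θ/2)]
        have e1 : (lam ^ i : ℝ) ^ (-(θ/2)) * L ^ (-(θ/2)) = (lam ^ i * L) ^ (-(θ/2)) :=
          (Real.mul_rpow hzi.le hL0.le).symm
        rw [e1, ← Real.rpow_add hx0]
        have e2 : (lam ^ i * L) ^ (-((N:ℝ)/2+1) + -(θ/2)) ≤ (lam ^ i * L) ^ (-θ') :=
          Real.rpow_le_rpow_of_exponent_le hx.le (by linarith)
        refine le_trans e2 (le_of_eq ?_)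
        rw [hEdef, hMeq, hconv θ', ← Real.mul_rpow hzi.le hL0.le]
      · have hMeq : max (lam ^ (-i)) 1 = 1 :=
          max_eq_right (zpow_le_one_of_nonpos₀ hlam.le (by omega))
        rw [hMeq, Real.one_rpow, one_mul]
        have hLx : L ≤ lam ^ i * L :=
          le_mul_of_one_le_left hL0.le (one_le_zpow₀ hlam.le (by omega))
        have e1 : (lam ^ i * L) ^ (-((N : ℝ) / 2 + 1)) ≤ L ^ (-((N : ℝ) / 2 + 1)) := by
          refine Real.rpow_le_rpow_of_nonpos hL0 hLx ?_
          have : (0:ℝ) ≤ (N:ℝ) := Nat.cast_nonneg N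
          linarith
        rw [hEdef, hMeq, Real.one_rpow, one_mul]
        calc (lam ^ i * L) ^ (-((N : ℝ) / 2 + 1)) * L ^ (-(θ/2))
            ≤ L ^ (-((N : ℝ) / 2 + 1)) * L ^ (-(θ/2)) :=
              mul_le_mul_of_nonneg_right e1 (le_of_lt (Real.rpow_pos_of_pos hL0 _))
          _ = L ^ (-((N : ℝ) / 2 + 1) + -(θ/2)) := (Real.rpow_add hL0 _ _).symm
          _ ≤ L ^ (-θ') := Real.rpow_le_rpow_of_exponent_le hL (by linarith)
    -- first term bound
    have ht1 : C * (lam ^ i * L) ^ (-((N : ℝ) / 2 + 1)) *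
        (∑ j ∈ Finset.Icc (-(ν : ℤ) - 1) ((ν : ℤ) + 2), Real.sqrt (A (i + j))) ≤ c1 * E := by
      have hxp : (0:ℝ) ≤ (lam ^ i * L) ^ (-((N : ℝ) / 2 + 1)) :=
        le_of_lt (Real.rpow_pos_of_pos hx0 _)
      calc C * (lam ^ i * L) ^ (-((N : ℝ) / 2 + 1)) *
          (∑ j ∈ Finset.Icc (-(ν : ℤ) - 1) ((ν : ℤ) + 2), Real.sqrt (A (i + j)))
          ≤ C * (lam ^ i * L) ^ (-((N : ℝ) / 2 + 1)) *
            ((2*(ν:ℝ)+4) * (T ^ ((1:ℝ)/2) * K ^ (θ/2) *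
              ((max (lam ^ (-i)) 1) ^ (θ/2) * L ^ (-(θ/2))))) := by
            refine mul_le_mul_of_nonneg_left hsum ?_
            positivity
        _ = c1 * ((lam ^ i * L) ^ (-((N : ℝ) / 2 + 1)) *
              ((max (lam ^ (-i)) 1) ^ (θ/2) * L ^ (-(θ/2)))) := by
            rw [hc1def]; ring
        _ ≤ c1 * E := mul_le_mul_of_nonneg_left hKI1 hc1.le
    -- second term bound
    set Bnd : ℝ := T * K ^ θ * ((max (lam ^ (-i)) 1) ^ θ * L ^ (-θ)) with hBnddef
    have hBnd0 : 0 ≤ Bnd := by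
      have := Real.rpow_pos_of_pos hK0 θ
      have := Real.rpow_pos_of_pos hM0 θ
      have := Real.rpow_pos_of_pos hL0 (-θ)
      positivity
    set a : ℝ := lam ^ ((N:ℤ)*((ν:ℤ)+2)) * Bnd with hadef
    have hfle : ∀ m : ℕ, lam ^ (-(N : ℤ) * ((m : ℤ) - (ν : ℤ) - 2)) *
        A (i + ((m : ℤ) - (ν : ℤ) - 2)) ≤ a * r ^ m := by
      intro m
      have hsplit : lam ^ (-(N : ℤ) * ((m : ℤ) - (ν : ℤ) - 2)) =
          lam ^ ((N:ℤ)*((ν:ℤ)+2)) * r ^ m := by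
        rw [hrdef, ← zpow_natCast (lam ^ (-(N:ℤ))) m, ← zpow_mul,
          ← zpow_add₀ (ne_of_gt h0)]
        congr 1; ring
      have hAle : A (i + ((m : ℤ) - (ν : ℤ) - 2)) ≤ Bnd := by
        refine le_trans (hIH _) ?_
        have hm : max (lam ^ (-(i + ((m : ℤ) - (ν : ℤ) - 2)))) 1 ≤ K * max (lam ^ (-i)) 1 :=
          maxM_shift lam hlam ν i _ (by omega)
        have h2 : (max (lam ^ (-(i + ((m : ℤ) - (ν : ℤ) - 2)))) 1) ^ θ ≤
            K ^ θ * (max (lam ^ (-i)) 1) ^ θ := by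
          rw [← Real.mul_rpow hK0.le hM0.le]
          exact Real.rpow_le_rpow (by positivity) hm hθ0
        have hLθ : (0:ℝ) ≤ L ^ (-θ) := le_of_lt (Real.rpow_pos_of_pos hL0 _)
        refine le_trans (mul_le_mul_of_nonneg_right
          (mul_le_mul_of_nonneg_left h2 hT.le) hLθ) (le_of_eq ?_)
        rw [hBnddef]; ring
      rw [hsplit]
      calc lam ^ ((N:ℤ)*((ν:ℤ)+2)) * r ^ m * A (i + ((m : ℤ) - (ν : ℤ) - 2))
          ≤ lam ^ ((N:ℤ)*((ν:ℤ)+2)) * r ^ m * Bnd := by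
            refine mul_le_mul_of_nonneg_left hAle ?_
            have := zpow_pos h0 ((N:ℤ)*((ν:ℤ)+2))
            positivity
        _ = a * r ^ m := by rw [hadef]; ring
    have hsummB : Summable (fun m : ℕ => a * r ^ m) :=
      (summable_geometric_of_lt_one hr0.le hr1).mul_left a
    have hf0 : ∀ m : ℕ, 0 ≤ lam ^ (-(N : ℤ) * ((m : ℤ) - (ν : ℤ) - 2)) *
        A (i + ((m : ℤ) - (ν : ℤ) - 2)) :=
      fun m => mul_nonneg (le_of_lt (zpow_pos h0 _)) (hA0 _)
    have hsummf : Summable (fun m : ℕ => lam ^ (-(N : ℤ) * ((m : ℤ) - (ν : ℤ) - 2)) *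
        A (i + ((m : ℤ) - (ν : ℤ) - 2))) :=
      Summable.of_nonneg_of_le hf0 hfle hsummB
    have htsum : (∑' m : ℕ, lam ^ (-(N : ℤ) * ((m : ℤ) - (ν : ℤ) - 2)) *
        A (i + ((m : ℤ) - (ν : ℤ) - 2))) ≤ a * (1-r)⁻¹ := by
      calc (∑' m : ℕ, lam ^ (-(N : ℤ) * ((m : ℤ) - (ν : ℤ) - 2)) *
          A (i + ((m : ℤ) - (ν : ℤ) - 2))) ≤ ∑' m : ℕ, a * r ^ m :=
            Summable.tsum_le_tsum hfle hsummf hsummB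
        _ = a * ∑' m : ℕ, r ^ m := tsum_mul_left
        _ = a * (1-r)⁻¹ := by rw [tsum_geometric_of_lt_one hr0.le hr1]
    have hKI2 : (max (lam ^ (-i)) 1) ^ θ * (L ^ (-(1-δ)) * L ^ (-θ)) ≤ E := by
      have e1 : (max (lam ^ (-i)) 1) ^ θ ≤ (max (lam ^ (-i)) 1) ^ θ' :=
        Real.rpow_le_rpow_of_exponent_le hM1 hθθ'
      have e2 : L ^ (-(1-δ)) * L ^ (-θ) = L ^ (-(1-δ) + -θ) := (Real.rpow_add hL0 _ _).symm
      have e3 : L ^ (-(1-δ) + -θ) ≤ L ^ (-θ') :=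
        Real.rpow_le_rpow_of_exponent_le hL (by linarith)
      rw [hEdef, e2]
      exact mul_le_mul e1 e3 (le_of_lt (Real.rpow_pos_of_pos hL0 _))
        (le_of_lt (Real.rpow_pos_of_pos hM0 _))
    have ht2 : C * L ^ (-(1 - δ)) *
        (∑' m : ℕ, lam ^ (-(N : ℤ) * ((m : ℤ) - (ν : ℤ) - 2)) *
          A (i + ((m : ℤ) - (ν : ℤ) - 2))) ≤ c2 * E := by
      have hLd : (0:ℝ) ≤ L ^ (-(1-δ)) := le_of_lt (Real.rpow_pos_of_pos hL0 _)
      calc C * L ^ (-(1 - δ)) *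
          (∑' m : ℕ, lam ^ (-(N : ℤ) * ((m : ℤ) - (ν : ℤ) - 2)) *
            A (i + ((m : ℤ) - (ν : ℤ) - 2)))
          ≤ C * L ^ (-(1 - δ)) * (a * (1-r)⁻¹) := by
            refine mul_le_mul_of_nonneg_left htsum ?_
            positivity
        _ = c2 * ((max (lam ^ (-i)) 1) ^ θ * (L ^ (-(1-δ)) * L ^ (-θ))) := by
            rw [hc2def, hadef, hBnddef]; ring
        _ ≤ c2 * E := mul_le_mul_of_nonneg_left hKI2 hc2.le
    refine le_trans (add_le_add ht1 ht2) ?_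
    have hfin : c1 * E + c2 * E = (c1 + c2) * E := by ring
    rw [hfin]
    refine mul_le_mul_of_nonneg_right ?_ hE0.le
    linarith

private lemma iter16 (N : ℕ) (hN : 3 ≤ N) (lam : ℝ) (hlam : 1 < lam) (ν : ℕ)
    (δ C : ℝ) (hδ : δ ∈ Set.Ioo (0 : ℝ) 1) (hC : 0 < C)
    (ε : ℝ) (hε : ε ∈ Set.Ioo (0 : ℝ) 1) :
    ∀ n : ℕ, ∃ θ T : ℝ, 0 ≤ θ ∧ θ ≤ (N:ℝ)+2 ∧
      min ((N:ℝ)+2-ε) ((n:ℝ) * min (1-δ) (ε/2)) ≤ θ ∧ 0 < T ∧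
      ∀ L : ℝ, 1 ≤ L → ∀ A : ℤ → ℝ,
      (∀ k, 0 ≤ A k) → (∀ k, A k ≤ C) →
      (∀ i : ℤ, A i ≤
          C * (lam ^ i * L) ^ (-((N : ℝ) / 2 + 1)) *
            (∑ j ∈ Finset.Icc (-(ν : ℤ) - 1) ((ν : ℤ) + 2), Real.sqrt (A (i + j))) +
          C * L ^ (-(1 - δ)) *
            ∑' m : ℕ, lam ^ (-(N : ℤ) * ((m : ℤ) - (ν : ℤ) - 2)) *
              A (i + ((m : ℤ) - (ν : ℤ) - 2))) →
      ∀ i, A i ≤ T * (max (lam ^ (-i)) 1) ^ θ * L ^ (-θ) := by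
  obtain ⟨hδ0, hδ1⟩ := hδ
  obtain ⟨hε0, hε1⟩ := hε
  intro n
  induction n with
  | zero =>
    refine ⟨0, C, le_refl _, by positivity, ?_, hC, ?_⟩
    · simpa using min_le_right _ _
    · intro L hL A hA0 hAC _ i
      have hL0 : (0:ℝ) < L := lt_of_lt_of_le one_pos hL
      simpa [Real.rpow_zero] using hAC i
  | succ n ih =>
    obtain ⟨θ, T, hθ0, hθN, hθmin, hT, hb⟩ := ih
    set θ' : ℝ := min ((N:ℝ)/2+1+θ/2) (θ+(1-δ)) with hθ'def
    have hθθ' : θ ≤ θ' := le_min (by linarith) (by linarith)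
    have hθ'a : θ' ≤ (N:ℝ)/2+1+θ/2 := min_le_left _ _
    have hθ'b : θ' ≤ θ+(1-δ) := min_le_right _ _
    have hθ'N : θ' ≤ (N:ℝ)+2 := le_trans hθ'a (by linarith)
    obtain ⟨T', hT', hstep⟩ := step16 N lam hlam hN ν δ C ⟨hδ0, hδ1⟩ hC θ θ'
      hθ0 hθθ' hθ'a hθ'b T hT
    refine ⟨θ', T', le_trans hθ0 hθθ', hθ'N, ?_, hT', ?_⟩
    · rcases le_or_gt ((N:ℝ)+2-ε) θ with hc | hc
      · exact le_trans (min_le_left _ _) (le_trans hc hθθ')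
      · have hg : θ + min (1-δ) (ε/2) ≤ θ' := by
          refine le_min ?_ ?_
          · have := min_le_right (1-δ) (ε/2); linarith
          · have := min_le_left (1-δ) (ε/2); linarith
        have hng : (n:ℝ) * min (1-δ) (ε/2) ≤ θ := by
          rcases le_total ((N:ℝ)+2-ε) ((n:ℝ) * min (1-δ) (ε/2)) with h | h
          · rw [min_eq_left h] at hθmin; linarith
          · rw [min_eq_right h] at hθmin; exact hθmin
        refine le_trans (min_le_right _ _) ?_
        push_cast
        nlinarith [hg, hng]
    · intro L hL A hA0 hAC hrec
      exact hstep L hL A hA0 hAC hrec (hb L hL A hA0 hAC hrec)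

theorem stmt16 (N : ℕ) (hN : 3 ≤ N) (lam : ℝ) (hlam : 1 < lam) (ν : ℕ)
    (δ C : ℝ) (hδ : δ ∈ Set.Ioo (0 : ℝ) 1) (hC : 0 < C) :
    ∀ ε ∈ Set.Ioo (0 : ℝ) 1, ∃ Cε > 0, ∀ L : ℝ, 1 ≤ L → ∀ A : ℤ → ℝ,
      (∀ k, 0 ≤ A k) → (∀ k, A k ≤ C) →
      (∀ i : ℤ, A i ≤
          C * (lam ^ i * L) ^ (-((N : ℝ) / 2 + 1)) *
            (∑ j ∈ Finset.Icc (-(ν : ℤ) - 1) ((ν : ℤ) + 2), Real.sqrt (A (i + j))) +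
          C * L ^ (-(1 - δ)) *
            ∑' m : ℕ, lam ^ (-(N : ℤ) * ((m : ℤ) - (ν : ℤ) - 2)) *
              A (i + ((m : ℤ) - (ν : ℤ) - 2))) →
      A 0 ≤ Cε * L ^ (-((N : ℝ) + 2 - ε)) := by
  intro ε hε
  obtain ⟨hε0, hε1⟩ := hε
  obtain ⟨hδ0, hδ1⟩ := hδ
  set g : ℝ := min (1-δ) (ε/2) with hgdef
  have hg0 : 0 < g := lt_min (by linarith) (by linarith)
  set n : ℕ := ⌈((N:ℝ)+2)/g⌉₊ with hndef
  obtain ⟨θ, T, hθ0, hθN, hθmin, hT, hb⟩ :=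
    iter16 N hN lam hlam ν δ C ⟨hδ0, hδ1⟩ hC ε ⟨hε0, hε1⟩ n
  have hng : (N:ℝ)+2 ≤ (n:ℝ) * g := by
    rw [hndef]
    have := Nat.le_ceil (((N:ℝ)+2)/g)
    rw [div_le_iff₀ hg0] at this
    exact this
  have hθlow : (N:ℝ)+2-ε ≤ θ := by
    refine le_trans ?_ hθmin
    rw [min_eq_left (by linarith)]
  refine ⟨T, hT, ?_⟩
  intro L hL A hA0 hAC hrec
  have hL0 : (0:ℝ) < L := lt_of_lt_of_le one_pos hL
  have h0 := hb L hL A hA0 hAC hrec 0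
  simp only [neg_zero, zpow_zero, max_self, Real.one_rpow, mul_one, one_mul] at h0
  refine le_trans h0 ?_
  have : L ^ (-θ) ≤ L ^ (-((N:ℝ)+2-ε)) :=
    Real.rpow_le_rpow_of_exponent_le hL (by linarith)
  exact mul_le_mul_of_nonneg_left this hT.le
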